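/- In the standing setup, suppose that (Id_V⊗Y)(Y⊗Id_V)w − q·w ∈ Υ³ for every w ∈ V⊗Υ² (this containment is a consequence of the braid equation for R). Then for all x,y ∈ V the identity ℓ_{xy} ∧ ℓ'_{xy} = ℓ_{xx} ∧ ℓ'_{yy} holds, i.e. ℓ_{xy}(u)ℓ'_{xy}(v) − ℓ_{xy}(v)ℓ'_{xy}(u) = ℓ_{xx}(u)ℓ'_{yy}(v) − ℓ_{xx}(v)ℓ'_{yy}(u) for all u,v ∈ V. -/

import Mathlib

open TensorProduct LinearMap

noncomputable section

variable (k V : Type) [Field k] [AddCommGroup V] [Module k V]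

/-- `R ⊗ Id` acting on `V ⊗ (V ⊗ V)`. -/
def op12 (R : V ⊗[k] V →ₗ[k] V ⊗[k] V) :
    V ⊗[k] (V ⊗[k] V) →ₗ[k] V ⊗[k] (V ⊗[k] V) :=
  (TensorProduct.assoc k V V V).toLinearMap ∘ₗ LinearMap.rTensor V R ∘ₗ
    (TensorProduct.assoc k V V V).symm.toLinearMap

/-- `Id ⊗ R` acting on `V ⊗ (V ⊗ V)`. -/
def op23 (R : V ⊗[k] V →ₗ[k] V ⊗[k] V) :
    V ⊗[k] (V ⊗[k] V) →ₗ[k] V ⊗[k] (V ⊗[k] V) :=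
  LinearMap.lTensor V R

/-- A Hecke symmetry with parameter `q`: an operator on `V ⊗ V` satisfying the braid
equation and the Hecke relation `(R - q·Id)(R + Id) = 0`, with `q ≠ 0`. -/
def IsHeckeSymmetry (q : k) (R : V ⊗[k] V →ₗ[k] V ⊗[k] V) : Prop :=
  q ≠ 0 ∧
    op12 k V R ∘ₗ op23 k V R ∘ₗ op12 k V R = op23 k V R ∘ₗ op12 k V R ∘ₗ op23 k V R ∧
    (R - q • LinearMap.id) ∘ₗ (R + LinearMap.id) = 0

/-- `x ⋏ y = ζ(x) ⊗ y - ζ(y) ⊗ x`. -/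
def wedge2 (ζ : V ≃ₗ[k] V) (x y : V) : V ⊗[k] V := ζ x ⊗ₜ[k] y - ζ y ⊗ₜ[k] x

/-- `Υ²`, the span of the tensors `x ⋏ y`. -/
def Ups2 (ζ : V ≃ₗ[k] V) : Submodule k (V ⊗[k] V) :=
  Submodule.span k {w : V ⊗[k] V | ∃ x y : V, w = wedge2 k V ζ x y}

/-- `x ⋏ y ⋏ z`. -/
def wedge3 (ζ : V ≃ₗ[k] V) (x y z : V) : V ⊗[k] (V ⊗[k] V) :=
  ζ (ζ x) ⊗ₜ[k] (ζ y ⊗ₜ[k] z) + ζ (ζ y) ⊗ₜ[k] (ζ z ⊗ₜ[k] x) + ζ (ζ z) ⊗ₜ[k] (ζ x ⊗ₜ[k] y)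
    - ζ (ζ x) ⊗ₜ[k] (ζ z ⊗ₜ[k] y) - ζ (ζ y) ⊗ₜ[k] (ζ x ⊗ₜ[k] z) - ζ (ζ z) ⊗ₜ[k] (ζ y ⊗ₜ[k] x)

/-- `Υ³`, the span of the tensors `x ⋏ y ⋏ z` (which coincides with
`(V ⊗ Υ²) ∩ (Υ² ⊗ V)`). -/
def Ups3 (ζ : V ≃ₗ[k] V) : Submodule k (V ⊗[k] (V ⊗[k] V)) :=
  Submodule.span k {t : V ⊗[k] (V ⊗[k] V) | ∃ x y z : V, t = wedge3 k V ζ x y z}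

/-- The bilinear extension `w ↦ x ⋏ w` of the wedge multiplication `V × Υ² → Υ³`:
on elements of `Υ²` it satisfies `x ⋏ (y ⋏ z) = x ⋏ y ⋏ z`. -/
def wedge31 (ζ : V ≃ₗ[k] V) (x : V) : V ⊗[k] V →ₗ[k] V ⊗[k] (V ⊗[k] V) :=
  TensorProduct.mk k V (V ⊗[k] V) (ζ (ζ x)) +
    (TensorProduct.assoc k V V V).toLinearMap ∘ₗ
      ((TensorProduct.mk k (V ⊗[k] V) V).flip x ∘ₗ
        TensorProduct.map ζ.toLinearMap ζ.toLinearMap) -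
    TensorProduct.map ζ.toLinearMap (TensorProduct.mk k V V (ζ x))

/-- The skewsymmetrizer `Y = q·Id - R`. -/
def skewY (q : k) (R : V ⊗[k] V →ₗ[k] V ⊗[k] V) : V ⊗[k] V →ₗ[k] V ⊗[k] V :=
  q • LinearMap.id - R

/-- `R' = (ζ⁻¹ ⊗ ζ⁻¹) ∘ R ∘ (ζ ⊗ ζ)`. -/
def Rprime (ζ : V ≃ₗ[k] V) (R : V ⊗[k] V →ₗ[k] V ⊗[k] V) :
    V ⊗[k] V →ₗ[k] V ⊗[k] V :=
  TensorProduct.map ζ.symm.toLinearMap ζ.symm.toLinearMap ∘ₗ R ∘ₗ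
    TensorProduct.map ζ.toLinearMap ζ.toLinearMap

/-- `ℓ_{xy}(z) = ω̃(x ⋏ Y(ζ(y) ⊗ z))`, where `Ω` is a linear extension of `ω̃` to
`V ⊗ V ⊗ V`. -/
def ell (ζ : V ≃ₗ[k] V) (Y : V ⊗[k] V →ₗ[k] V ⊗[k] V)
    (Ω : V ⊗[k] (V ⊗[k] V) →ₗ[k] k) (x y : V) : Module.Dual k V :=
  Ω ∘ₗ wedge31 k V ζ x ∘ₗ Y ∘ₗ TensorProduct.mk k V V (ζ y)

/-- The linear forms `ℓ_{xy}` associated with the Hecke symmetry `R`. -/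
def ellF (ζ : V ≃ₗ[k] V) (q : k) (R : V ⊗[k] V →ₗ[k] V ⊗[k] V)
    (Ω : V ⊗[k] (V ⊗[k] V) →ₗ[k] k) (x y : V) : Module.Dual k V :=
  ell k V ζ (skewY k V q R) Ω x y

/-- The linear forms `ℓ'_{xy}` associated with the twisted Hecke symmetry `R'`. -/
def ellF' (ζ : V ≃ₗ[k] V) (q : k) (R : V ⊗[k] V →ₗ[k] V ⊗[k] V)
    (Ω : V ⊗[k] (V ⊗[k] V) →ₗ[k] k) (x y : V) : Module.Dual k V :=
  ell k V ζ (skewY k V q (Rprime k V ζ R)) Ω x y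


set_option linter.unusedSectionVars false
set_option maxHeartbeats 1600000 in
section
namespace StmtAux
variable {k V : Type} [Field k] [AddCommGroup V] [Module k V]
variable (ω : AlternatingMap k V k (Fin 3))




section Omega

private lemma upd0 (a b c z : V) : Function.update ![a, b, c] (0 : Fin 3) z = ![z, b, c] := by
  funext i; fin_cases i <;> simp
private lemma upd1 (a b c z : V) : Function.update ![a, b, c] (1 : Fin 3) z = ![a, z, c] := by
  funext i; fin_cases i <;> simp [Function.update]
private lemma upd2 (a b c z : V) : Function.update ![a, b, c] (2 : Fin 3) z = ![a, b, z] := by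
  funext i; fin_cases i <;> simp [Function.update]

lemma omega_add0 (a a' b c : V) : ω ![a + a', b, c] = ω ![a, b, c] + ω ![a', b, c] := by
  have h := ω.toMultilinearMap.map_update_add ![a, b, c] 0 a a'
  rwa [upd0, upd0, upd0] at h
lemma omega_add1 (a b b' c : V) : ω ![a, b + b', c] = ω ![a, b, c] + ω ![a, b', c] := by
  have h := ω.toMultilinearMap.map_update_add ![a, b, c] 1 b b'
  rwa [upd1, upd1, upd1] at h
lemma omega_add2 (a b c c' : V) : ω ![a, b, c + c'] = ω ![a, b, c] + ω ![a, b, c'] := by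
  have h := ω.toMultilinearMap.map_update_add ![a, b, c] 2 c c'
  rwa [upd2, upd2, upd2] at h
lemma omega_smul0 (t : k) (a b c : V) : ω ![t • a, b, c] = t * ω ![a, b, c] := by
  have h := ω.toMultilinearMap.map_update_smul ![a, b, c] 0 t a
  rwa [upd0, upd0] at h
lemma omega_smul1 (t : k) (a b c : V) : ω ![a, t • b, c] = t * ω ![a, b, c] := by
  have h := ω.toMultilinearMap.map_update_smul ![a, b, c] 1 t b
  rwa [upd1, upd1] at h
lemma omega_smul2 (t : k) (a b c : V) : ω ![a, b, t • c] = t * ω ![a, b, c] := by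
  have h := ω.toMultilinearMap.map_update_smul ![a, b, c] 2 t c
  rwa [upd2, upd2] at h

lemma omega_swap01 (a b c : V) : ω ![b, a, c] = -ω ![a, b, c] := by
  have h := ω.map_swap (v := ![a, b, c]) (i := 0) (j := 1) (by decide)
  have e : (![a, b, c] ∘ Equiv.swap (0 : Fin 3) 1) = ![b, a, c] := by
    funext i; fin_cases i <;> simp [Equiv.swap_apply_def]
  rwa [e] at h
lemma omega_swap12 (a b c : V) : ω ![a, c, b] = -ω ![a, b, c] := by
  have h := ω.map_swap (v := ![a, b, c]) (i := 1) (j := 2) (by decide)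
  have e : (![a, b, c] ∘ Equiv.swap (1 : Fin 3) 2) = ![a, c, b] := by
    funext i; fin_cases i <;> simp [Equiv.swap_apply_def]
  rwa [e] at h
lemma omega_cyc (a b c : V) : ω ![c, a, b] = ω ![a, b, c] := by
  rw [omega_swap01, omega_swap12, neg_neg]
lemma omega_cyc' (a b c : V) : ω ![b, c, a] = ω ![a, b, c] := by
  rw [omega_cyc ω c a b, omega_cyc ω a b c]

lemma omega_rep01 (a b : V) : ω ![a, a, b] = 0 :=
  ω.map_eq_zero_of_eq _ (i := 0) (j := 1) rfl (by decide)
lemma omega_rep02 (a b : V) : ω ![a, b, a] = 0 :=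
  ω.map_eq_zero_of_eq _ (i := 0) (j := 2) rfl (by decide)
lemma omega_rep12 (a b : V) : ω ![a, b, b] = 0 :=
  ω.map_eq_zero_of_eq _ (i := 1) (j := 2) rfl (by decide)

lemma omega_exp0 {cc β1 β2 β3 : k} {w x1 x2 x3 : V}
    (hw : cc • w = β1 • x1 + β2 • x2 + β3 • x3) (b c : V) :
    cc * ω ![w, b, c] = β1 * ω ![x1, b, c] + β2 * ω ![x2, b, c] + β3 * ω ![x3, b, c] := by
  rw [← omega_smul0, hw, omega_add0, omega_add0, omega_smul0, omega_smul0, omega_smul0]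
lemma omega_exp1 {cc β1 β2 β3 : k} {w x1 x2 x3 : V}
    (hw : cc • w = β1 • x1 + β2 • x2 + β3 • x3) (b c : V) :
    cc * ω ![b, w, c] = β1 * ω ![b, x1, c] + β2 * ω ![b, x2, c] + β3 * ω ![b, x3, c] := by
  rw [← omega_smul1, hw, omega_add1, omega_add1, omega_smul1, omega_smul1, omega_smul1]
lemma omega_exp2 {cc β1 β2 β3 : k} {w x1 x2 x3 : V}
    (hw : cc • w = β1 • x1 + β2 • x2 + β3 • x3) (b c : V) :
    cc * ω ![b, c, w] = β1 * ω ![b, c, x1] + β2 * ω ![b, c, x2] + β3 * ω ![b, c, x3] := by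
  rw [← omega_smul2, hw, omega_add2, omega_add2, omega_smul2, omega_smul2, omega_smul2]

end Omega




lemma A0 (hdim : Module.finrank k V = 3) (g : V →ₗ[k] k) (w0 w1 w2 w3 : V) :
    g w0 * ω ![w1, w2, w3] - g w1 * ω ![w0, w2, w3]
      + g w2 * ω ![w0, w1, w3] - g w3 * ω ![w0, w1, w2] = 0 := by
  have hfd : FiniteDimensional k V := Module.finite_of_finrank_pos (by omega)
  have hdep : ¬ LinearIndependent k ![w0, w1, w2, w3] := by
    intro h
    have h2 := h.fintype_card_le_finrank
    rw [hdim, Fintype.card_fin] at h2; omega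
  rw [Fintype.not_linearIndependent_iff] at hdep
  obtain ⟨c, hc, i, hi⟩ := hdep
  rw [Fin.sum_univ_four] at hc
  simp only [Matrix.cons_val_zero, Matrix.cons_val_one, Matrix.head_cons,
    Matrix.cons_val_two, Matrix.tail_cons, Matrix.cons_val_three] at hc
  fin_cases i
  · have hi' : c 0 ≠ 0 := hi
    have hw : c 0 • w0 = (-(c 1)) • w1 + (-(c 2)) • w2 + (-(c 3)) • w3 := by
      linear_combination (norm := module) hc
    have hg : c 0 * g w0 = (-(c 1)) * g w1 + (-(c 2)) * g w2 + (-(c 3)) * g w3 := by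
      rw [← smul_eq_mul, ← map_smul, hw]; simp [smul_eq_mul]
    have h1 := omega_exp0 ω hw w2 w3
    have h2 := omega_exp0 ω hw w1 w3
    have h3 := omega_exp0 ω hw w1 w2
    rw [omega_rep01 ω w2 w3, omega_rep02 ω w3 w2] at h1
    rw [omega_rep01 ω w1 w3, omega_rep02 ω w3 w1, omega_swap01 ω w1 w2 w3] at h2
    rw [omega_rep01 ω w1 w2, omega_rep02 ω w2 w1, omega_cyc ω w1 w2 w3] at h3
    have key : c 0 * (g w0 * ω ![w1, w2, w3] - g w1 * ω ![w0, w2, w3]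
        + g w2 * ω ![w0, w1, w3] - g w3 * ω ![w0, w1, w2]) = 0 := by
      linear_combination (ω ![w1, w2, w3]) * hg - g w1 * h1 + g w2 * h2 - g w3 * h3
    rcases mul_eq_zero.mp key with h | h
    · exact absurd h hi'
    · exact h
  · have hi' : c 1 ≠ 0 := hi
    have hw : c 1 • w1 = (-(c 0)) • w0 + (-(c 2)) • w2 + (-(c 3)) • w3 := by
      linear_combination (norm := module) hc
    have hg : c 1 * g w1 = (-(c 0)) * g w0 + (-(c 2)) * g w2 + (-(c 3)) * g w3 := by
      rw [← smul_eq_mul, ← map_smul, hw]; simp [smul_eq_mul]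
    have h1 := omega_exp0 ω hw w2 w3
    have h2 := omega_exp1 ω hw w0 w3
    have h3 := omega_exp1 ω hw w0 w2
    rw [omega_rep01 ω w2 w3, omega_rep02 ω w3 w2] at h1
    rw [omega_rep01 ω w0 w3, omega_rep12 ω w0 w3] at h2
    rw [omega_rep01 ω w0 w2, omega_rep12 ω w0 w2, omega_swap12 ω w0 w2 w3] at h3
    have key : c 1 * (g w0 * ω ![w1, w2, w3] - g w1 * ω ![w0, w2, w3]
        + g w2 * ω ![w0, w1, w3] - g w3 * ω ![w0, w1, w2]) = 0 := by
      linear_combination g w0 * h1 - (ω ![w0, w2, w3]) * hg + g w2 * h2 - g w3 * h3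
    rcases mul_eq_zero.mp key with h | h
    · exact absurd h hi'
    · exact h
  · have hi' : c 2 ≠ 0 := hi
    have hw : c 2 • w2 = (-(c 0)) • w0 + (-(c 1)) • w1 + (-(c 3)) • w3 := by
      linear_combination (norm := module) hc
    have hg : c 2 * g w2 = (-(c 0)) * g w0 + (-(c 1)) * g w1 + (-(c 3)) * g w3 := by
      rw [← smul_eq_mul, ← map_smul, hw]; simp [smul_eq_mul]
    have h1 := omega_exp1 ω hw w1 w3
    have h2 := omega_exp1 ω hw w0 w3
    have h3 := omega_exp2 ω hw w0 w1
    rw [omega_rep01 ω w1 w3, omega_rep12 ω w1 w3, omega_swap01 ω w0 w1 w3] at h1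
    rw [omega_rep01 ω w0 w3, omega_rep12 ω w0 w3] at h2
    rw [omega_rep02 ω w0 w1, omega_rep12 ω w0 w1] at h3
    have key : c 2 * (g w0 * ω ![w1, w2, w3] - g w1 * ω ![w0, w2, w3]
        + g w2 * ω ![w0, w1, w3] - g w3 * ω ![w0, w1, w2]) = 0 := by
      linear_combination g w0 * h1 - g w1 * h2 + (ω ![w0, w1, w3]) * hg - g w3 * h3
    rcases mul_eq_zero.mp key with h | h
    · exact absurd h hi'
    · exact h
  · have hi' : c 3 ≠ 0 := hi
    have hw : c 3 • w3 = (-(c 0)) • w0 + (-(c 1)) • w1 + (-(c 2)) • w2 := by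
      linear_combination (norm := module) hc
    have hg : c 3 * g w3 = (-(c 0)) * g w0 + (-(c 1)) * g w1 + (-(c 2)) * g w2 := by
      rw [← smul_eq_mul, ← map_smul, hw]; simp [smul_eq_mul]
    have h1 := omega_exp2 ω hw w1 w2
    have h2 := omega_exp2 ω hw w0 w2
    have h3 := omega_exp2 ω hw w0 w1
    rw [omega_rep02 ω w1 w2, omega_rep12 ω w1 w2, omega_cyc' ω w0 w1 w2] at h1
    rw [omega_rep02 ω w0 w2, omega_rep12 ω w0 w2, omega_swap12 ω w0 w1 w2] at h2
    rw [omega_rep02 ω w0 w1, omega_rep12 ω w0 w1] at h3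
    have key : c 3 * (g w0 * ω ![w1, w2, w3] - g w1 * ω ![w0, w2, w3]
        + g w2 * ω ![w0, w1, w3] - g w3 * ω ![w0, w1, w2]) = 0 := by
      linear_combination g w0 * h1 - g w1 * h2 + g w2 * h3 - (ω ![w0, w1, w2]) * hg
    rcases mul_eq_zero.mp key with h | h
    · exact absurd h hi'
    · exact h



variable (ζ : V ≃ₗ[k] V)


lemma w31_wedge2 (z p r : V) :
    wedge31 k V ζ z (wedge2 k V ζ p r) = wedge3 k V ζ z p r := by
  simp only [wedge31, wedge2, wedge3, LinearMap.sub_apply, LinearMap.add_apply,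
    LinearMap.coe_comp, Function.comp_apply, map_sub, TensorProduct.map_tmul,
    TensorProduct.mk_apply, LinearMap.flip_apply, LinearEquiv.coe_coe,
    TensorProduct.assoc_tmul, TensorProduct.tmul_sub, TensorProduct.sub_tmul,
    LinearEquiv.coe_toLinearMap]
  abel

lemma w31_mem (z : V) {s : V ⊗[k] V} (hs : s ∈ Ups2 k V ζ) :
    wedge31 k V ζ z s ∈ Ups3 k V ζ := by
  induction hs using Submodule.span_induction with
  | mem t ht =>
      obtain ⟨p, r, rfl⟩ := ht
      rw [w31_wedge2]
      exact Submodule.subset_span ⟨z, p, r, rfl⟩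
  | zero => simp
  | add a b _ _ ha hb => rw [map_add]; exact Submodule.add_mem _ ha hb
  | smul t a _ ha => rw [map_smul]; exact Submodule.smul_mem _ _ ha

lemma map_symm_wedge2 (p r : V) :
    TensorProduct.map ζ.symm.toLinearMap ζ.symm.toLinearMap (wedge2 k V ζ p r)
      = wedge2 k V ζ (ζ.symm p) (ζ.symm r) := by
  simp [wedge2, TensorProduct.map_tmul]

lemma map_symm_mem {s : V ⊗[k] V} (hs : s ∈ Ups2 k V ζ) :
    TensorProduct.map ζ.symm.toLinearMap ζ.symm.toLinearMap s ∈ Ups2 k V ζ := by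
  induction hs using Submodule.span_induction with
  | mem t ht =>
      obtain ⟨p, r, rfl⟩ := ht
      rw [map_symm_wedge2]
      exact Submodule.subset_span ⟨_, _, rfl⟩
  | zero => simp
  | add a b _ _ ha hb => rw [map_add]; exact Submodule.add_mem _ ha hb
  | smul t a _ ha => rw [map_smul]; exact Submodule.smul_mem _ _ ha

/-- `ζ ⊗ ζ ⊗ ζ` on `V ⊗ (V ⊗ V)`. -/
def Z3 : V ⊗[k] (V ⊗[k] V) →ₗ[k] V ⊗[k] (V ⊗[k] V) :=
  TensorProduct.map ζ.toLinearMap (TensorProduct.map ζ.toLinearMap ζ.toLinearMap)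

lemma Z3_wedge3 (a b c : V) :
    Z3 ζ (wedge3 k V ζ a b c) = wedge3 k V ζ (ζ a) (ζ b) (ζ c) := by
  simp [Z3, wedge3, TensorProduct.map_tmul]

lemma w31_zeta (z : V) (m : V ⊗[k] V) :
    wedge31 k V ζ (ζ z) (TensorProduct.map ζ.toLinearMap ζ.toLinearMap m)
      = Z3 ζ (wedge31 k V ζ z m) := by
  induction m with
  | zero => simp
  | tmul b c =>
      simp only [wedge31, Z3, LinearMap.sub_apply, LinearMap.add_apply, LinearMap.coe_comp,
        Function.comp_apply, TensorProduct.map_tmul, TensorProduct.mk_apply,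
        LinearMap.flip_apply, LinearEquiv.coe_coe, TensorProduct.assoc_tmul,
        LinearEquiv.coe_toLinearMap, map_sub, map_add, TensorProduct.tmul_sub,
        TensorProduct.sub_tmul, TensorProduct.tmul_add]
  | add a b ha hb =>
      simp only [map_add, ha, hb]

lemma skewY_conj (q : k) (R : V ⊗[k] V →ₗ[k] V ⊗[k] V) (t : V ⊗[k] V) :
    TensorProduct.map ζ.toLinearMap ζ.toLinearMap (skewY k V q (Rprime k V ζ R) t)
      = skewY k V q R (TensorProduct.map ζ.toLinearMap ζ.toLinearMap t) := by
  have hmm : ∀ s : V ⊗[k] V,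
      TensorProduct.map ζ.toLinearMap ζ.toLinearMap
        (TensorProduct.map ζ.symm.toLinearMap ζ.symm.toLinearMap s) = s := by
    intro s
    induction s with
    | zero => simp
    | tmul a b => simp
    | add a b ha hb => rw [map_add, map_add, ha, hb]
  simp only [skewY, Rprime, LinearMap.sub_apply, LinearMap.smul_apply, LinearMap.id_apply,
    LinearMap.coe_comp, Function.comp_apply, map_sub, map_smul, hmm]

/-- The functional `a ⊗ m ↦ f(a)·G(m)`. -/
def pairF {W : Type} [AddCommGroup W] [Module k W] (f : V →ₗ[k] k) (G : W →ₗ[k] k) :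
    V ⊗[k] W →ₗ[k] k :=
  TensorProduct.lift ((LinearMap.mul k k).compl₁₂ f G)

@[simp] lemma pairF_tmul {W : Type} [AddCommGroup W] [Module k W]
    (f : V →ₗ[k] k) (G : W →ₗ[k] k) (a : V) (m : W) :
    pairF f G (a ⊗ₜ[k] m) = f a * G m := rfl

/-- The linear form `w ↦ ω(w, m, n)`. -/
def omegaL (ω : AlternatingMap k V k (Fin 3)) (m n : V) : V →ₗ[k] k where
  toFun w := ω ![w, m, n]
  map_add' a a' := omega_add0 ω a a' m n
  map_smul' t a := omega_smul0 ω t a m n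

@[simp] lemma omegaL_apply (ω : AlternatingMap k V k (Fin 3)) (m n w : V) :
    omegaL ω m n w = ω ![w, m, n] := rfl

lemma omega_det (hdim : Module.finrank k V = 3) (ω : AlternatingMap k V k (Fin 3))
    (a b c : V) :
    ω ![ζ a, ζ b, ζ c] = LinearMap.det ζ.toLinearMap * ω ![a, b, c] := by
  have : FiniteDimensional k V := Module.finite_of_finrank_pos (by omega)
  let b3 : Module.Basis (Fin 3) k V := Module.finBasisOfFinrankEq k V hdim
  have hω := ω.eq_smul_basis_det b3
  have hv : ![ζ a, ζ b, ζ c] = ζ.toLinearMap ∘ ![a, b, c] := by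
    funext i; fin_cases i <;> simp
  rw [hv, hω]
  simp only [AlternatingMap.smul_apply, smul_eq_mul]
  rw [b3.det_comp]
  ring

lemma omega_Z3 (hdim : Module.finrank k V = 3) (ω : AlternatingMap k V k (Fin 3))
    (Ω : V ⊗[k] (V ⊗[k] V) →ₗ[k] k)
    (hΩ : ∀ x y z : V, Ω (wedge3 k V ζ x y z) = ω ![x, y, z])
    {t : V ⊗[k] (V ⊗[k] V)} (ht : t ∈ Ups3 k V ζ) :
    Ω (Z3 ζ t) = LinearMap.det ζ.toLinearMap * Ω t := by
  induction ht using Submodule.span_induction with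
  | mem s hs =>
      obtain ⟨a, b, c, rfl⟩ := hs
      rw [Z3_wedge3, hΩ, hΩ, omega_det ζ hdim ω]
  | zero => simp
  | add a b _ _ ha hb => simp only [map_add, ha, hb]; ring
  | smul r a _ ha => simp only [map_smul, smul_eq_mul, ha]; ring

/-- The main cross-product identity on `Υ²`. -/
lemma cross (hdim : Module.finrank k V = 3) (ω : AlternatingMap k V k (Fin 3))
    (Ω : V ⊗[k] (V ⊗[k] V) →ₗ[k] k)
    (hΩ : ∀ x y z : V, Ω (wedge3 k V ζ x y z) = ω ![x, y, z])
    (x y : V) (g : V →ₗ[k] k) {s : V ⊗[k] V} (hs : s ∈ Ups2 k V ζ) :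
    pairF ((omegaL ω (ζ y) (ζ x)) ∘ₗ ζ.symm.toLinearMap) g s
      = g (ζ y) * Ω (wedge31 k V ζ (ζ x) s) - g (ζ x) * Ω (wedge31 k V ζ (ζ y) s) := by
  induction hs using Submodule.span_induction with
  | mem t ht =>
      obtain ⟨p, r, rfl⟩ := ht
      rw [w31_wedge2, w31_wedge2, hΩ, hΩ]
      have hp : pairF ((omegaL ω (ζ y) (ζ x)) ∘ₗ ζ.symm.toLinearMap) g (wedge2 k V ζ p r)
          = ω ![p, ζ y, ζ x] * g r - ω ![r, ζ y, ζ x] * g p := by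
        simp [wedge2, map_sub]
      rw [hp]
      have hA := A0 ω hdim g p r (ζ y) (ζ x)
      have c1 : ω ![p, r, ζ x] = ω ![ζ x, p, r] := (omega_cyc ω p r (ζ x)).symm
      have c2 : ω ![p, r, ζ y] = ω ![ζ y, p, r] := (omega_cyc ω p r (ζ y)).symm
      rw [c1, c2] at hA
      linear_combination -hA
  | zero => simp
  | add a b _ _ ha hb => simp only [map_add, ha, hb]; ring
  | smul r a _ ha => simp only [map_smul, smul_eq_mul, ha]; ring

/-- `Φ` kills `Υ³`. -/
lemma phi_ups3 (hdim : Module.finrank k V = 3) (ω : AlternatingMap k V k (Fin 3))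
    (Ω : V ⊗[k] (V ⊗[k] V) →ₗ[k] k)
    (hΩ : ∀ x y z : V, Ω (wedge3 k V ζ x y z) = ω ![x, y, z])
    (x y : V) {t : V ⊗[k] (V ⊗[k] V)} (ht : t ∈ Ups3 k V ζ) :
    pairF ((omegaL ω (ζ y) (ζ x)) ∘ₗ ζ.symm.toLinearMap) (Ω ∘ₗ wedge31 k V ζ x) t = 0 := by
  induction ht using Submodule.span_induction with
  | mem s hs =>
      obtain ⟨a, b, c, rfl⟩ := hs
      have e1 : Ω (wedge31 k V ζ x (wedge2 k V ζ b c)) = ω ![x, b, c] := by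
        rw [w31_wedge2, hΩ]
      have e2 : Ω (wedge31 k V ζ x (wedge2 k V ζ c a)) = ω ![x, c, a] := by
        rw [w31_wedge2, hΩ]
      have e3 : Ω (wedge31 k V ζ x (wedge2 k V ζ a b)) = ω ![x, a, b] := by
        rw [w31_wedge2, hΩ]
      have hexp : pairF ((omegaL ω (ζ y) (ζ x)) ∘ₗ ζ.symm.toLinearMap)
            (Ω ∘ₗ wedge31 k V ζ x) (wedge3 k V ζ a b c)
          = ω ![ζ a, ζ y, ζ x] * Ω (wedge31 k V ζ x (wedge2 k V ζ b c))
            + ω ![ζ b, ζ y, ζ x] * Ω (wedge31 k V ζ x (wedge2 k V ζ c a))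
            + ω ![ζ c, ζ y, ζ x] * Ω (wedge31 k V ζ x (wedge2 k V ζ a b)) := by
        simp only [wedge3, wedge2, map_sub, map_add, pairF_tmul, LinearMap.coe_comp,
          Function.comp_apply, omegaL_apply, LinearEquiv.coe_toLinearMap,
          LinearEquiv.symm_apply_apply, LinearMap.sub_apply, LinearMap.add_apply]
        ring
      rw [hexp, e1, e2, e3]
      have hA := A0 ω hdim ((omegaL ω (ζ y) (ζ x)) ∘ₗ ζ.toLinearMap) x a b c
      simp only [LinearMap.coe_comp, Function.comp_apply, omegaL_apply,
        LinearEquiv.coe_toLinearMap] at hA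
      rw [omega_rep02 ω (ζ x) (ζ y)] at hA
      have c1 : ω ![x, c, a] = -ω ![x, a, c] := omega_swap12 ω x a c
      rw [c1]
      linear_combination -hA
  | zero => simp
  | add a b _ _ ha hb => simp only [map_add, ha, hb]; ring
  | smul r a _ ha => simp only [map_smul, smul_eq_mul, ha]; ring



end StmtAux
end
theorem stmt2 (hdim : Module.finrank k V = 3) (ζ : V ≃ₗ[k] V) (q : k)
    (R : V ⊗[k] V →ₗ[k] V ⊗[k] V) (hR : IsHeckeSymmetry k V q R)
    (hY : LinearMap.range (skewY k V q R) = Ups2 k V ζ)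
    (ω : AlternatingMap k V k (Fin 3)) (hω : ω ≠ 0)
    (Ω : V ⊗[k] (V ⊗[k] V) →ₗ[k] k)
    (hΩ : ∀ x y z : V, Ω (wedge3 k V ζ x y z) = ω ![x, y, z])
    -- the containment (2.6): `(Id ⊗ Y)(Y ⊗ Id)w - q·w ∈ Υ³` for all `w ∈ V ⊗ Υ²`
    (h26 : ∀ w ∈ LinearMap.range (LinearMap.lTensor V (Ups2 k V ζ).subtype),
      op23 k V (skewY k V q R) (op12 k V (skewY k V q R) w) - q • w ∈ Ups3 k V ζ) :
    ∀ x y u v : V,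
      ellF k V ζ q R Ω x y u * ellF' k V ζ q R Ω x y v
          - ellF k V ζ q R Ω x y v * ellF' k V ζ q R Ω x y u =
        ellF k V ζ q R Ω x x u * ellF' k V ζ q R Ω y y v
          - ellF k V ζ q R Ω x x v * ellF' k V ζ q R Ω y y u := by
  intro x y u v
  classical
  set Y : V ⊗[k] V →ₗ[k] V ⊗[k] V := skewY k V q R with hYd
  set Y' : V ⊗[k] V →ₗ[k] V ⊗[k] V := skewY k V q (Rprime k V ζ R) with hY'd
  set f : V →ₗ[k] k := (StmtAux.omegaL ω (ζ y) (ζ x)) ∘ₗ ζ.symm.toLinearMap with hfd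
  set Φ : V ⊗[k] (V ⊗[k] V) →ₗ[k] k := StmtAux.pairF f (Ω ∘ₗ wedge31 k V ζ x) with hPd
  set W : V ⊗[k] (V ⊗[k] V) := (ζ (ζ y)) ⊗ₜ[k] (wedge2 k V ζ v u) with hWd
  set Sv : V ⊗[k] V := Y (ζ (ζ y) ⊗ₜ[k] ζ v) with hSvd
  set Su : V ⊗[k] V := Y (ζ (ζ y) ⊗ₜ[k] ζ u) with hSud
  set δ : k := LinearMap.det ζ.toLinearMap with hdd
  have hδ : δ ≠ 0 := IsUnit.ne_zero ζ.isUnit_det'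
  -- h26 instance
  have hmem : W ∈ LinearMap.range (LinearMap.lTensor V (Ups2 k V ζ).subtype) :=
    ⟨(ζ (ζ y)) ⊗ₜ ⟨wedge2 k V ζ v u, Submodule.subset_span ⟨v, u, rfl⟩⟩, by
      rw [LinearMap.lTensor_tmul]; rfl⟩
  have h26' := h26 W hmem
  -- Φ kills the defect and kills W
  have hΦE : Φ (op23 k V Y (op12 k V Y W) - q • W) = 0 :=
    StmtAux.phi_ups3 ζ hdim ω Ω hΩ x y h26'
  have hΦW : Φ W = 0 := by
    rw [hWd, hPd, StmtAux.pairF_tmul, hfd]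
    have : ((StmtAux.omegaL ω (ζ y) (ζ x)) ∘ₗ ζ.symm.toLinearMap) (ζ (ζ y)) = 0 := by
      simp [StmtAux.omega_rep01]
    rw [this, zero_mul]
  have hkey : Φ (op23 k V Y (op12 k V Y W)) = 0 := by
    have := hΦE
    rw [map_sub, map_smul, hΦW, smul_zero, sub_zero] at this
    exact this
  -- expansion of op12
  have hop : op12 k V Y W
      = (TensorProduct.assoc k V V V) (Sv ⊗ₜ[k] u) - (TensorProduct.assoc k V V V) (Su ⊗ₜ[k] v) := by
    rw [hWd]
    simp only [op12, wedge2, TensorProduct.tmul_sub, map_sub, LinearMap.coe_comp,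
      Function.comp_apply, LinearEquiv.coe_coe, TensorProduct.assoc_symm_tmul,
      LinearMap.rTensor_tmul, TensorProduct.assoc_tmul]
    rfl
  -- Φ after op23 on assoc'd tensors
  have hexp : ∀ (S : V ⊗[k] V) (c : V),
      Φ (op23 k V Y ((TensorProduct.assoc k V V V) (S ⊗ₜ[k] c)))
        = StmtAux.pairF f ((Ω ∘ₗ wedge31 k V ζ x) ∘ₗ Y ∘ₗ ((TensorProduct.mk k V V).flip c)) S := by
    intro S c
    induction S with
    | zero => simp
    | tmul p r =>
        rw [TensorProduct.assoc_tmul]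
        simp only [op23, LinearMap.lTensor_tmul, hPd, StmtAux.pairF_tmul,
          LinearMap.coe_comp, Function.comp_apply, LinearMap.flip_apply,
          TensorProduct.mk_apply]
    | add a b ha hb => simp only [TensorProduct.add_tmul, map_add, ha, hb]
  -- memberships
  have hSvm : Sv ∈ Ups2 k V ζ := hY ▸ LinearMap.mem_range_self _ _
  have hSum : Su ∈ Ups2 k V ζ := hY ▸ LinearMap.mem_range_self _ _
  -- the two cross evaluations
  set gu : V →ₗ[k] k := (Ω ∘ₗ wedge31 k V ζ x) ∘ₗ Y ∘ₗ ((TensorProduct.mk k V V).flip u) with hgud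
  set gv : V →ₗ[k] k := (Ω ∘ₗ wedge31 k V ζ x) ∘ₗ Y ∘ₗ ((TensorProduct.mk k V V).flip v) with hgvd
  have hzero : StmtAux.pairF f gu Sv - StmtAux.pairF f gv Su = 0 := by
    rw [← hexp, ← hexp, ← map_sub, ← map_sub, ← hop]
    exact hkey
  have hcrossv := StmtAux.cross ζ hdim ω Ω hΩ x y gu hSvm
  have hcrossu := StmtAux.cross ζ hdim ω Ω hΩ x y gv hSum
  -- identify scalar values
  have hguy : gu (ζ y) = ellF k V ζ q R Ω x y u := rfl
  have hgux : gu (ζ x) = ellF k V ζ q R Ω x x u := rfl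
  have hgvy : gv (ζ y) = ellF k V ζ q R Ω x y v := rfl
  have hgvx : gv (ζ x) = ellF k V ζ q R Ω x x v := rfl
  -- conjugation identities
  have hSv' : TensorProduct.map ζ.toLinearMap ζ.toLinearMap (Y' (ζ y ⊗ₜ[k] v)) = Sv := by
    rw [hY'd, StmtAux.skewY_conj, TensorProduct.map_tmul]
    rfl
  have hSu' : TensorProduct.map ζ.toLinearMap ζ.toLinearMap (Y' (ζ y ⊗ₜ[k] u)) = Su := by
    rw [hY'd, StmtAux.skewY_conj, TensorProduct.map_tmul]
    rfl
  have hmapback : ∀ s : V ⊗[k] V,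
      TensorProduct.map ζ.symm.toLinearMap ζ.symm.toLinearMap
        (TensorProduct.map ζ.toLinearMap ζ.toLinearMap s) = s := by
    intro s
    induction s with
    | zero => simp
    | tmul a b => simp
    | add a b ha hb => simp only [map_add, ha, hb]
  have hYv'mem : Y' (ζ y ⊗ₜ[k] v) ∈ Ups2 k V ζ := by
    have h1 : Y' (ζ y ⊗ₜ[k] v)
        = TensorProduct.map ζ.symm.toLinearMap ζ.symm.toLinearMap Sv := by
      rw [← hSv', hmapback]
    rw [h1]; exact StmtAux.map_symm_mem ζ hSvm
  have hYu'mem : Y' (ζ y ⊗ₜ[k] u) ∈ Ups2 k V ζ := by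
    have h1 : Y' (ζ y ⊗ₜ[k] u)
        = TensorProduct.map ζ.symm.toLinearMap ζ.symm.toLinearMap Su := by
      rw [← hSu', hmapback]
    rw [h1]; exact StmtAux.map_symm_mem ζ hSum
  have hconv : ∀ (z : V) (S : V ⊗[k] V) (t : V ⊗[k] V)
      (hS : TensorProduct.map ζ.toLinearMap ζ.toLinearMap t = S) (htm : t ∈ Ups2 k V ζ),
      Ω (wedge31 k V ζ (ζ z) S) = δ * Ω (wedge31 k V ζ z t) := by
    intro z S t hS htm
    rw [← hS, StmtAux.w31_zeta, StmtAux.omega_Z3 ζ hdim ω Ω hΩ (StmtAux.w31_mem ζ z htm)]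
  have hc1 : Ω (wedge31 k V ζ (ζ x) Sv) = δ * ellF' k V ζ q R Ω x y v :=
    hconv x Sv _ hSv' hYv'mem
  have hc2 : Ω (wedge31 k V ζ (ζ y) Sv) = δ * ellF' k V ζ q R Ω y y v :=
    hconv y Sv _ hSv' hYv'mem
  have hc3 : Ω (wedge31 k V ζ (ζ x) Su) = δ * ellF' k V ζ q R Ω x y u :=
    hconv x Su _ hSu' hYu'mem
  have hc4 : Ω (wedge31 k V ζ (ζ y) Su) = δ * ellF' k V ζ q R Ω y y u :=
    hconv y Su _ hSu' hYu'mem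
  rw [hcrossv, hcrossu, hguy, hgux, hgvy, hgvx, hc1, hc2, hc3, hc4] at hzero
  have hfinal : δ * (ellF k V ζ q R Ω x y u * ellF' k V ζ q R Ω x y v
      - ellF k V ζ q R Ω x y v * ellF' k V ζ q R Ω x y u
      - (ellF k V ζ q R Ω x x u * ellF' k V ζ q R Ω y y v
        - ellF k V ζ q R Ω x x v * ellF' k V ζ q R Ω y y u)) = 0 := by
    linear_combination hzero
  rcases mul_eq_zero.mp hfinal with h | h
  · exact absurd h hδ
  · linear_combination h
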